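/- arXiv:0712.2601 — 3 statements merged into one kernel-verified Lean document; each statement's English description precedes it below -/
import Mathlib

section
/- Let G be a group, φ an automorphism of G, Γ = G ⋊_φ ℤ with distinguished generator t, and let F : Γ → K be a surjective homomorphism onto a finite group K. If F separates two conjugacy classes of Γ contained in the coset G·t (i.e., F(x·t) and F(y·t) are not conjugate in K for representatives x·t, y·t of these classes), then x and y are not φ-conjugate in G; moreover the restriction F|_G : G → Im(F|_G) separates the corresponding φ-conjugacy classes: h·x·φ(h)⁻¹ and y have distinct images under F|_G for every h ∈ G, and Ker(F|_G) is invariant under φ. -/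
/-- `x` and `y` are `φ`-conjugate (twisted conjugate): `y = g * x * φ(g)⁻¹` for some `g`. -/
def TwistedConj {G : Type*} [Group G] (φ : MulAut G) (x y : G) : Prop :=
  ∃ g : G, y = g * x * (φ g)⁻¹

/-- The semidirect product `Γ = G ⋊_φ ℤ`, where the generator `t` of the `ℤ`-factor
acts on `G` by `t g t⁻¹ = φ(g)`. -/
abbrev Gamma (G : Type*) [Group G] (φ : MulAut G) :=
  G ⋊[zpowersHom (MulAut G) φ] Multiplicative ℤ

/-- The distinguished generator `t` of the `ℤ`-factor of `Γ`. -/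
noncomputable def tGen (G : Type*) [Group G] (φ : MulAut G) : Gamma G φ :=
  SemidirectProduct.inr (Multiplicative.ofAdd (1 : ℤ))

/-!
Conjugating `x·t` by `h ∈ G` inside `Γ` gives `(h·x·φ(h)⁻¹)·t`. Hence `F(h·x·φ(h)⁻¹) = F(y)`
would make `F(x·t)` and `F(y·t)` conjugate, and `h·x·φ(h)⁻¹ = y` is the special case that
excludes `φ`-conjugacy. Conjugation by `t` realises `φ` on `G`, so it preserves `Ker(F|_G)`.
-/

section SemidirectProduct

open SemidirectProduct

variable {G : Type*} [Group G] (φ : MulAut G)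

theorem tGen_mul_inl_mul_inv (g : G) :
    tGen G φ * inl g * (tGen G φ)⁻¹ = (inl (φ g) : Gamma G φ) := by
  ext <;> simp [tGen]

theorem isConj_inl_mul_tGen (h x : G) :
    IsConj (inl x * tGen G φ) (inl (h * x * (φ h)⁻¹) * tGen G φ) :=
  isConj_iff.mpr ⟨inl h, by ext <;> simp [tGen]⟩

theorem map_inl_apply_eq_one {K : Type*} [Group K] (F : Gamma G φ →* K) {g : G}
    (hg : F (inl g) = 1) : F (inl (φ g)) = 1 := by
  rw [← tGen_mul_inl_mul_inv, map_mul, map_mul, hg, mul_one, map_inv, mul_inv_cancel]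

end SemidirectProduct

theorem restriction_separates_twisted_classes_general
    {G : Type*} [Group G] (φ : MulAut G)
    (K : Type*) [Group K]
    (F : Gamma G φ →* K)
    (x y : G)
    (hsep : ¬ IsConj (F (SemidirectProduct.inl x * tGen G φ))
        (F (SemidirectProduct.inl y * tGen G φ))) :
    ¬ TwistedConj φ x y ∧
    (∀ h : G, F (SemidirectProduct.inl (h * x * (φ h)⁻¹)) ≠ F (SemidirectProduct.inl y)) ∧
    (∀ g : G, F (SemidirectProduct.inl g) = 1 → F (SemidirectProduct.inl (φ g)) = 1) := by
  have hrestr : ∀ h : G,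
      F (SemidirectProduct.inl (h * x * (φ h)⁻¹)) ≠ F (SemidirectProduct.inl y) := by
    intro h heq
    have hconj := F.map_isConj (isConj_inl_mul_tGen φ h x)
    rw [map_mul F (SemidirectProduct.inl (h * x * (φ h)⁻¹)), heq, ← map_mul] at hconj
    exact hsep hconj
  exact ⟨fun ⟨h, hy⟩ => hrestr h (by rw [hy]), hrestr, fun _ => map_inl_apply_eq_one φ F⟩

/-- Let `F : Γ → K` be a surjective homomorphism onto a finite group `K`. If `F`
separates the conjugacy classes of `x·t` and `y·t` in `Γ` (their images are not
conjugate in `K`), then `x` and `y` are not `φ`-conjugate in `G`, the restriction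
`F|_G` separates the corresponding `φ`-conjugacy classes (every twisted conjugate
`h·x·φ(h)⁻¹` has image distinct from the image of `y`), and `Ker(F|_G)` is
`φ`-invariant. -/
theorem restriction_separates_twisted_classes
    {G : Type*} [Group G] (φ : MulAut G)
    (K : Type*) [Group K] [Finite K]
    (F : Gamma G φ →* K) (hsurj : Function.Surjective F)
    (x y : G)
    (hsep : ¬ IsConj (F (SemidirectProduct.inl x * tGen G φ))
        (F (SemidirectProduct.inl y * tGen G φ))) :
    ¬ TwistedConj φ x y ∧
    (∀ h : G, F (SemidirectProduct.inl (h * x * (φ h)⁻¹)) ≠ F (SemidirectProduct.inl y)) ∧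
    (∀ g : G, F (SemidirectProduct.inl g) = 1 → F (SemidirectProduct.inl (φ g)) = 1) :=
  restriction_separates_twisted_classes_general φ K F x y hsep
end

section
/- Let G be a group and φ an automorphism of G with Reidemeister number R(φ) < ∞. Then G is φ-conjugacy separable if and only if G has property RP(φ), i.e., there exist a finite group K, an automorphism φ_K of K, and a surjective homomorphism F : G → K with F ∘ φ = φ_K ∘ F such that the characteristic function of every φ-conjugacy class of G factors through F as the characteristic function of a subset of K. -/
/-- Twisted conjugacy is an equivalence relation; its classes are the
`φ`-conjugacy (Reidemeister) classes. -/
def twSetoid (G : Type*) [Group G] (φ : MulAut G) : Setoid G where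
  r := TwistedConj φ
  iseqv := by
    refine ⟨fun x => ⟨1, by simp⟩, ?_, ?_⟩
    · rintro x y ⟨g, rfl⟩
      exact ⟨g⁻¹, by simp [mul_assoc]⟩
    · rintro x y z ⟨g, rfl⟩ ⟨h, rfl⟩
      exact ⟨h * g, by simp [mul_assoc]⟩

/-- A finite quotient of `G` respecting `φ` that separates the elements `x` and `y`:
a finite group `K`, an automorphism `φ_K`, and a surjective homomorphism `F : G → K`
with `F ∘ φ = φ_K ∘ F` such that `F x` and `F y` are not `φ_K`-conjugate in `K`. -/
inductive SepWitness {G : Type*} [Group G] (φ : MulAut G) (x y : G) : Prop where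
  | intro (K : Type) [grp : Group K] [fin : Finite K] (φK : MulAut K) (F : G →* K)
      (surj : Function.Surjective F) (comm : ∀ g : G, F (φ g) = φK (F g))
      (sep : ¬ TwistedConj φK (F x) (F y)) : SepWitness φ x y

/-- `G` is `φ`-conjugacy separable: any pair of non-`φ`-conjugate elements of `G`
are non-`φ_K`-conjugate in some finite quotient of `G` respecting `φ`. -/
def PhiConjSep {G : Type*} [Group G] (φ : MulAut G) : Prop :=
  ∀ x y : G, ¬ TwistedConj φ x y → SepWitness φ x y

/-- Property `RP(φ)`: there exist a finite group `K`, an automorphism `φ_K` of `K`, and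
a surjective homomorphism `F : G → K` with `F ∘ φ = φ_K ∘ F` such that the characteristic
function of every `φ`-conjugacy (Reidemeister) class of `G` factors through `F` as the
characteristic function of a subset of `K`. -/
inductive RP {G : Type*} [Group G] (φ : MulAut G) : Prop where
  | intro (K : Type) [grp : Group K] [fin : Finite K] (φK : MulAut K) (F : G →* K)
      (surj : Function.Surjective F) (comm : ∀ g : G, F (φ g) = φK (F g))
      (factors : ∀ x : G, ∃ S : Set K, {g : G | TwistedConj φ x g} = F ⁻¹' S) : RP φ

/-!
If `F : G → K` is as in `RP(φ)` and the class of `x` is `F⁻¹(S)`, then `F y` being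
`φ_K`-conjugate to `F x` forces `F y = F (g x φ(g)⁻¹) ∈ S`, so `y` is `φ`-conjugate to `x`.
Conversely, when there are finitely many Reidemeister classes, choose a separating finite
quotient for each pair of distinct classes. The intersection `N` of their kernels is a
`φ`-stable normal subgroup of finite index, and no class can meet a coset of `N` without
containing it; hence `G ⧸ N` has property `RP(φ)`.
-/

section

variable {G : Type*} [Group G] {φ : MulAut G}

namespace TwistedConj

theorem symm {x y : G} (h : TwistedConj φ x y) : TwistedConj φ y x := (twSetoid G φ).symm h

theorem trans {x y z : G} (hxy : TwistedConj φ x y) (hyz : TwistedConj φ y z) :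
    TwistedConj φ x z :=
  (twSetoid G φ).trans hxy hyz

theorem map {K : Type*} [Group K] {φK : MulAut K} (F : G →* K) (comm : ∀ g, F (φ g) = φK (F g))
    {x y : G} (h : TwistedConj φ x y) : TwistedConj φK (F x) (F y) := by
  obtain ⟨g, rfl⟩ := h
  exact ⟨F g, by simp [comm]⟩

end TwistedConj

/-- Kernels of the finite quotients of `G` to which `φ` descends. -/
structure Subgroup.IsStableFiniteIndexNormal (φ : MulAut G) (N : Subgroup G) : Prop where
  normal : N.Normal
  finiteIndex : N.FiniteIndex
  comap_eq : N.comap (φ : G →* G) = N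

theorem MonoidHom.isStableFiniteIndexNormal_ker {K : Type*} [Group K] [Finite K] {φK : MulAut K}
    (F : G →* K) (comm : ∀ g, F (φ g) = φK (F g)) : F.ker.IsStableFiniteIndexNormal φ := by
  refine ⟨F.normal_ker, Subgroup.finiteIndex_ker F, ?_⟩
  have hcomp : F.comp (φ : G →* G) = (φK : K →* K).comp F := MonoidHom.ext comm
  rw [MonoidHom.comap_ker, hcomp, MonoidHom.ker_mulEquiv_comp]

theorem Subgroup.IsStableFiniteIndexNormal.iInf {ι : Type*} [Finite ι] {N : ι → Subgroup G}
    (hN : ∀ i, (N i).IsStableFiniteIndexNormal φ) : (⨅ i, N i).IsStableFiniteIndexNormal φ where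
  normal := Subgroup.normal_iInf_normal fun i => (hN i).normal
  finiteIndex := Subgroup.finiteIndex_iInf fun i => (hN i).finiteIndex
  comap_eq := by simp only [Subgroup.comap_iInf, fun i => (hN i).comap_eq]

/-- `hsat` says that every twisted conjugacy class is a union of cosets of `N`. -/
theorem Subgroup.IsStableFiniteIndexNormal.rp {N : Subgroup G} (hN : N.IsStableFiniteIndexNormal φ)
    (hsat : ∀ x g n, n ∈ N → TwistedConj φ x g → TwistedConj φ x (g * n)) : RP φ := by
  have := hN.normal
  have := hN.finiteIndex
  have hmap : N.map (φ : G →* G) = N := by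
    rw [Subgroup.map_equiv_eq_comap_symm]
    conv_lhs => rw [← hN.comap_eq]
    rw [Subgroup.comap_comap]
    simp
  let e : Shrink.{0} (G ⧸ N) ≃* G ⧸ N := Shrink.mulEquiv
  let φN : MulAut (G ⧸ N) := QuotientGroup.congr N N φ hmap
  let F : G →* Shrink.{0} (G ⧸ N) := e.symm.toMonoidHom.comp (QuotientGroup.mk' N)
  refine ⟨Shrink.{0} (G ⧸ N), e.trans (φN.trans e.symm), F,
    e.symm.surjective.comp (QuotientGroup.mk'_surjective N), fun g => ?_,
    fun x => ⟨F '' {g | TwistedConj φ x g}, ?_⟩⟩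
  · simp [F, φN]
  · refine (Set.subset_preimage_image _ _).antisymm ?_
    rintro g ⟨h, hxh, hFhg⟩
    have hhg : h⁻¹ * g ∈ N := QuotientGroup.eq.mp (e.symm.injective hFhg)
    simpa using hsat x h _ hhg hxh

theorem SepWitness.exists_isStableFiniteIndexNormal {x y : G} (h : SepWitness φ x y) :
    ∃ N : Subgroup G, N.IsStableFiniteIndexNormal φ ∧
      ∀ y', TwistedConj φ y y' → ∀ n ∈ N, ¬ TwistedConj φ x (y' * n) := by
  obtain ⟨K, φK, F, -, comm, sep⟩ := h
  refine ⟨F.ker, F.isStableFiniteIndexNormal_ker comm, fun y' hyy' n hn hx => sep ?_⟩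
  have hFx := hx.map F comm
  rw [map_mul, hn, mul_one] at hFx
  exact hFx.trans (hyy'.map F comm).symm

theorem RP.phiConjSep (h : RP φ) : PhiConjSep φ := by
  obtain ⟨K, φK, F, surj, comm, factors⟩ := h
  intro x y hxy
  refine ⟨K, φK, F, surj, comm, fun ⟨k, hk⟩ => hxy ?_⟩
  obtain ⟨S, hS⟩ := factors x
  obtain ⟨g, rfl⟩ := surj k
  have hg : g * x * (φ g)⁻¹ ∈ F ⁻¹' S := hS ▸ ⟨g, rfl⟩
  show y ∈ {z | TwistedConj φ x z}
  rw [hS]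
  simpa [hk, comm] using hg

theorem PhiConjSep.rp (hR : Finite (Quotient (twSetoid G φ))) (hsep : PhiConjSep φ) : RP φ := by
  let P := {p : Quotient (twSetoid G φ) × Quotient (twSetoid G φ) // p.1 ≠ p.2}
  have hN (p : P) := (hsep p.1.1.out p.1.2.out
    fun h => p.2 (Quotient.out_equiv_out.mp h)).exists_isStableFiniteIndexNormal
  choose N hN hsepN using hN
  refine (Subgroup.IsStableFiniteIndexNormal.iInf hN).rp fun x g n hn hxg => ?_
  by_contra hxgn
  let p : P := ⟨(⟦x⟧, ⟦g * n⟧), fun h => hxgn (Quotient.exact h)⟩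
  refine hsepN p (g * n) (Quotient.mk_out (s := twSetoid G φ) _) n⁻¹
    (inv_mem (Subgroup.mem_iInf.mp hn p)) ?_
  simpa using TwistedConj.trans (Quotient.mk_out (s := twSetoid G φ) x) hxg

end

/-- Suppose `R(φ) < ∞`. Then `G` is `φ`-conjugacy separable if and only if `G`
has property `RP(φ)`. -/
theorem phiConjSep_iff_rp {G : Type*} [Group G] (φ : MulAut G)
    (hR : Finite (Quotient (twSetoid G φ))) :
    PhiConjSep φ ↔ RP φ :=
  ⟨PhiConjSep.rp hR, RP.phiConjSep⟩
end

section
/- Let G be a group and φ an automorphism of G, and suppose the semidirect product Γ = G ⋊_φ ℤ is conjugacy separable. Then G is φ-conjugacy separable. Consequently, if a class of conjugacy separable groups is closed under taking semidirect products by ℤ, then every group in this class is strongly twisted conjugacy separable. -/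
/-- A finite quotient of `G` separating the (ordinary) conjugacy classes of `x` and `y`. -/
inductive ConjSepWitness (G : Type*) [Group G] (x y : G) : Prop where
  | intro (K : Type) [grp : Group K] [fin : Finite K] (F : G →* K)
      (surj : Function.Surjective F) (sep : ¬ IsConj (F x) (F y)) : ConjSepWitness G x y

/-- `G` is conjugacy separable: any pair of non-conjugate elements of `G` have
non-conjugate images in some finite quotient of `G`. -/
def ConjSep (G : Type*) [Group G] : Prop :=
  ∀ x y : G, ¬ IsConj x y → ConjSepWitness G x y

/-! In `Γ = G ⋊_φ ℤ`, conjugating `x t` by `g tⁿ` gives `(g φⁿ(x) φ(g)⁻¹) t`, and `φⁿ(x)` is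
`φ`-conjugate to `x`; so `x t` and `y t` are conjugate in `Γ` only if `x` and `y` are
`φ`-conjugate. If a finite quotient `F` of `Γ` separates `x t` from `y t`, then `F(G)` is a
finite quotient of `G` on which conjugation by `F(t)` realises `φ`, and a twisted conjugacy
`F(y) = a F(x) (F(t) a F(t)⁻¹)⁻¹` there would give `F(y t) = a F(x t) a⁻¹`. -/

namespace TwistedConj

variable {G : Type*} [Group G] {φ : MulAut G}

theorem refl (x : G) : TwistedConj φ x x := ⟨1, by simp⟩

theorem self_apply (x : G) : TwistedConj φ x (φ x) := ⟨x⁻¹, by simp⟩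

theorem self_symm_apply (x : G) : TwistedConj φ x (φ.symm x) := ⟨φ.symm x, by simp⟩

theorem self_zpow_apply (x : G) (n : ℤ) : TwistedConj φ x ((φ ^ n) x) := by
  induction n with
  | zero => exact refl x
  | succ n ih =>
    rw [add_comm, zpow_add, zpow_one]
    exact ih.trans (self_apply _)
  | pred n ih =>
    rw [sub_eq_neg_add, zpow_add, zpow_neg_one]
    exact ih.trans (self_symm_apply _)

end TwistedConj

namespace MonoidHom

variable {G K : Type*} [Group G] [Group K] {φ : MulAut G} {F : G →* K} {k : K}

theorem range_map_conj_eq (hF : ∀ g, F (φ g) = k * F g * k⁻¹) :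
    F.range.map (MulAut.conj k).toMonoidHom = F.range := by
  have hcomp : (MulAut.conj k).toMonoidHom.comp F = F.comp φ.toMonoidHom := by
    ext g; simp [hF]
  rw [map_range, hcomp, range_comp, range_eq_top.mpr φ.surjective, ← range_eq_map]

variable (hF : ∀ g, F (φ g) = k * F g * k⁻¹)

def rangeConjAut : MulAut F.range :=
  ((MulAut.conj k).subgroupMap F.range).trans
    (MulEquiv.subgroupCongr (F.range_map_conj_eq hF))

theorem rangeConjAut_apply_coe (a : F.range) :
    (F.rangeConjAut hF a : K) = k * a * k⁻¹ := rfl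

theorem rangeRestrict_apply_mulAut (g : G) :
    F.rangeRestrict (φ g) = F.rangeConjAut hF (F.rangeRestrict g) :=
  Subtype.ext (hF g)

theorem isConj_mul_of_twistedConj_rangeConjAut {a b : F.range}
    (h : TwistedConj (F.rangeConjAut hF) a b) : IsConj ((a : K) * k) (b * k) := by
  obtain ⟨c, rfl⟩ := h
  refine isConj_iff.mpr ⟨c, ?_⟩
  simp only [Subgroup.coe_mul, Subgroup.coe_inv, F.rangeConjAut_apply_coe hF]
  group

end MonoidHom

namespace Gamma

open SemidirectProduct

variable {G : Type*} [Group G] (φ : MulAut G)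

def t : Gamma G φ := inr (Multiplicative.ofAdd 1)

theorem inl_apply (g : G) : (inl (φ g) : Gamma G φ) = t φ * inl g * (t φ)⁻¹ := by
  simpa [t] using inl_aut (φ := zpowersHom (MulAut G) φ) (Multiplicative.ofAdd 1) g

theorem conj_inl_mul_t (g x : G) (m : Multiplicative ℤ) :
    (inl g * inr m) * (inl x * t φ) * (inl g * inr m)⁻¹ =
      (inl (g * (φ ^ m.toAdd) x * (φ g)⁻¹) * t φ : Gamma G φ) := by
  have hcomm : (φ ^ m.toAdd) (φ ((φ ^ m.toAdd).symm g)) = φ g := by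
    change ((φ ^ m.toAdd) * φ) ((φ ^ m.toAdd).symm g) = φ g
    rw [← (Commute.self_zpow φ m.toAdd).eq, MulAut.mul_apply, MulEquiv.apply_symm_apply]
  ext <;> simp [t, mul_assoc, hcomm]

theorem twistedConj_of_isConj_inl_mul_t {φ : MulAut G} {x y : G}
    (h : IsConj (inl x * t φ) (inl y * t φ)) : TwistedConj φ x y := by
  obtain ⟨c, hc⟩ := isConj_iff.mp h
  rw [← inl_left_mul_inr_right c, conj_inl_mul_t, mul_left_inj, inl_inj] at hc
  exact (TwistedConj.self_zpow_apply x _).trans ⟨c.left, hc.symm⟩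

end Gamma

open SemidirectProduct in
theorem PhiConjSep.of_conjSep_gamma {G : Type*} [Group G] {φ : MulAut G}
    (hΓ : ConjSep (Gamma G φ)) : PhiConjSep φ := by
  intro x y hxy
  have hnc : ¬ IsConj (inl x * Gamma.t φ) (inl y * Gamma.t φ) :=
    fun h => hxy (Gamma.twistedConj_of_isConj_inl_mul_t h)
  obtain ⟨K, F, -, hsep⟩ := hΓ _ _ hnc
  let F₀ : G →* K := F.comp inl
  have hF₀ : ∀ g, F₀ (φ g) = F (Gamma.t φ) * F₀ g * (F (Gamma.t φ))⁻¹ := fun g => by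
    simp [F₀, Gamma.inl_apply]
  refine .intro F₀.range (F₀.rangeConjAut hF₀) F₀.rangeRestrict F₀.rangeRestrict_surjective
    (F₀.rangeRestrict_apply_mulAut hF₀) fun h => hsep ?_
  simpa [F₀] using F₀.isConj_mul_of_twistedConj_rangeConjAut hF₀ h

/-- If the semidirect product `Γ = G ⋊_φ ℤ` is conjugacy separable then `G` is
`φ`-conjugacy separable. Consequently, if a class of conjugacy separable groups is
closed under taking semidirect products by `ℤ`, then every group in this class is
strongly twisted conjugacy separable (i.e. `φ`-conjugacy separable for every
automorphism `φ`). -/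
theorem phiConjSep_of_conjSep_semidirect :
    (∀ (G : Type u) [Group G] (φ : MulAut G), ConjSep (Gamma G φ) → PhiConjSep φ) ∧
    (∀ P : (H : Type u) → [Group H] → Prop,
      (∀ (H : Type u) [Group H], P H → ConjSep H) →
      (∀ (H : Type u) [Group H] (ψ : MulAut H), P H → P (Gamma H ψ)) →
      ∀ (H : Type u) [Group H], P H → ∀ ψ : MulAut H, PhiConjSep ψ) :=
  ⟨fun _ _ _ => .of_conjSep_gamma,
    fun _ hconj hclosed H _ hP ψ => .of_conjSep_gamma (hconj _ (hclosed H ψ hP))⟩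
end
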